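/- arXiv:1806.10284 — 2 statements merged into one kernel-verified Lean document; each statement's English description precedes it below -/
import Mathlib

section
/- Let n₁, n₂, n₃ ≥ 1 be integers, integers 0 ≤ m₁ ≤ n₁, 0 ≤ m₂ ≤ n₁, 0 ≤ m₃ ≤ n₂, ρ₁, ρ₂, ρ₃ ∈ {0,1}, δx, δy, δz > 0, κ ∈ ℝ³, a₁ = (n₁δx, 0, 0), a₂ = ((m₁ − ρ₁n₁)δx, n₂δy, 0), a₃ = ((m₂ − ρ₂n₁)δx, (m₃ − ρ₃n₂)δy, n₃δz). Suppose f : ℝ³ → ℂ is quasi-periodic with Bloch vector κ along a₁, a₂ and a₃. Then for all integers i, j with 0 ≤ i < n₁ and 0 ≤ j < n₂ there exist unique integers p, q, i*, j* with 0 ≤ i* < n₁, 0 ≤ j* < n₂, i = (m₂ − ρ₂n₁) + q(m₁ − ρ₁n₁) + p·n₁ + i* and j = (m₃ − ρ₃n₂) + q·n₂ + j*, and for all c, d, z ∈ ℝ one has f(iδx + c, jδy + d, n₃δz + z) = exp(2πι κ·(a₃ + q·a₂ + p·a₁)) · f(i*δx + c, j*δy + d, z). (Theorem 3.3: periodicity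 of the field components along a₁, a₂ and a₃, encoded by the matrix J₃.) -/
/-! Since `κ·a` is additive in `a`, the quasi-periods of `f` form an additive subgroup of `ℝ³`,
so `f` is quasi-periodic along `a₃ + q a₂ + p a₁` for all integers `p, q`. The integers `q, j*`
are the quotient and remainder of `j − (m₃ − ρ₃n₂)` by `n₂`, and then `p, i*` those of
`i − (m₂ − ρ₂n₁) − q(m₁ − ρ₁n₁)` by `n₁`; the point `(iδx + c, jδy + d, n₃δz + z)` is then
`(i*δx + c, j*δy + d, z)` shifted by `a₃ + q a₂ + p a₁`. -/

open Real

/-- The Euclidean dot product on `ℝ³` (as a triple of reals). -/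
def dot3 (u v : ℝ × ℝ × ℝ) : ℝ := u.1 * v.1 + u.2.1 * v.2.1 + u.2.2 * v.2.2

/-- `f : ℝ³ → ℂ` is quasi-periodic with Bloch vector `κ` along `a`:
`f (x + a) = exp (2πι κ·a) * f x` for all `x ∈ ℝ³`. -/
def QuasiPeriodic (f : ℝ × ℝ × ℝ → ℂ) (κ a : ℝ × ℝ × ℝ) : Prop :=
  ∀ x : ℝ × ℝ × ℝ,
    f (x.1 + a.1, x.2.1 + a.2.1, x.2.2 + a.2.2)
      = Complex.exp (2 * (π : ℂ) * Complex.I * (dot3 κ a : ℝ)) * f x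

lemma dot3_add_right (κ a b : ℝ × ℝ × ℝ) : dot3 κ (a + b) = dot3 κ a + dot3 κ b := by
  simp only [dot3, Prod.fst_add, Prod.snd_add]
  ring

lemma dot3_neg_right (κ a : ℝ × ℝ × ℝ) : dot3 κ (-a) = -dot3 κ a := by
  simp only [dot3, Prod.fst_neg, Prod.snd_neg]
  ring

namespace QuasiPeriodic

variable {f : ℝ × ℝ × ℝ → ℂ} {κ a b : ℝ × ℝ × ℝ}

lemma apply_add (ha : QuasiPeriodic f κ a) (x : ℝ × ℝ × ℝ) :
    f (x + a) = Complex.exp (2 * (π : ℂ) * Complex.I * (dot3 κ a : ℝ)) * f x :=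
  ha x

lemma zero : QuasiPeriodic f κ 0 := fun x => by
  simp [dot3]

lemma add (ha : QuasiPeriodic f κ a) (hb : QuasiPeriodic f κ b) : QuasiPeriodic f κ (a + b) :=
  fun x => by
    show f (x + (a + b)) = _
    rw [← add_assoc, hb.apply_add, ha.apply_add, dot3_add_right, ← mul_assoc,
      ← Complex.exp_add]
    congr 2
    push_cast
    ring

lemma neg (ha : QuasiPeriodic f κ a) : QuasiPeriodic f κ (-a) := fun x => by
  have h := ha.apply_add (x + -a)
  rw [neg_add_cancel_right] at h
  show f (x + -a) = _
  rw [h, dot3_neg_right, ← mul_assoc, ← Complex.exp_add]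
  simp

end QuasiPeriodic

def quasiPeriods (f : ℝ × ℝ × ℝ → ℂ) (κ : ℝ × ℝ × ℝ) : AddSubgroup (ℝ × ℝ × ℝ) where
  carrier := {a | QuasiPeriodic f κ a}
  zero_mem' := QuasiPeriodic.zero
  add_mem' := QuasiPeriodic.add
  neg_mem' := QuasiPeriodic.neg

lemma Int.eq_ediv_and_eq_emod {a b q r : ℤ} (hb : 0 < b) (hr₀ : 0 ≤ r) (hr : r < b)
    (h : a = q * b + r) : q = a / b ∧ r = a % b := by
  obtain ⟨hq, hr'⟩ :=
    (Int.ediv_emod_unique (a := a) (q := q) hb).2 ⟨by rw [h]; ring, hr₀, hr⟩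
  exact ⟨hq.symm, hr'.symm⟩

lemma existsUnique_shear_decomposition {n₁ n₂ : ℤ} (hn₁ : 0 < n₁) (hn₂ : 0 < n₂)
    (s₁ s₂ s₃ i j : ℤ) :
    ∃! t : ℤ × ℤ × ℤ × ℤ,
      0 ≤ t.2.2.1 ∧ t.2.2.1 < n₁ ∧ 0 ≤ t.2.2.2 ∧ t.2.2.2 < n₂ ∧
        i = s₂ + t.2.1 * s₁ + t.1 * n₁ + t.2.2.1 ∧ j = s₃ + t.2.1 * n₂ + t.2.2.2 := by
  set q := (j - s₃) / n₂
  set p := (i - s₂ - q * s₁) / n₁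
  refine ⟨(p, q, (i - s₂ - q * s₁) % n₁, (j - s₃) % n₂),
    ⟨Int.emod_nonneg _ hn₁.ne', Int.emod_lt_of_pos _ hn₁, Int.emod_nonneg _ hn₂.ne',
      Int.emod_lt_of_pos _ hn₂, ?_, ?_⟩, ?_⟩
  · linarith [Int.mul_ediv_add_emod (i - s₂ - q * s₁) n₁]
  · linarith [Int.mul_ediv_add_emod (j - s₃) n₂]
  · rintro ⟨p', q', i', j'⟩ ⟨hi'₀, hi', hj'₀, hj', hi, hj⟩
    obtain ⟨rfl, rfl⟩ :=
      Int.eq_ediv_and_eq_emod hn₂ hj'₀ hj' (by linarith : j - s₃ = q' * n₂ + j')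
    obtain ⟨rfl, rfl⟩ :=
      Int.eq_ediv_and_eq_emod hn₁ hi'₀ hi' (by linarith : i - s₂ - q * s₁ = p' * n₁ + i')
    rfl

theorem stmt_2_general (n₁ n₂ n₃ : ℕ) (hn₁ : 1 ≤ n₁) (hn₂ : 1 ≤ n₂)
    (m₁ m₂ m₃ : ℕ)
    (ρ₁ ρ₂ ρ₃ : ℕ)
    (δx δy δz : ℝ) (κ : ℝ × ℝ × ℝ)
    (a₁ a₂ a₃ : ℝ × ℝ × ℝ)
    (ha₁ : a₁ = ((n₁ : ℝ) * δx, 0, 0))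
    (ha₂ : a₂ = (((m₁ : ℝ) - (ρ₁ : ℝ) * n₁) * δx, (n₂ : ℝ) * δy, 0))
    (ha₃ : a₃ = (((m₂ : ℝ) - (ρ₂ : ℝ) * n₁) * δx, ((m₃ : ℝ) - (ρ₃ : ℝ) * n₂) * δy,
      (n₃ : ℝ) * δz))
    (f : ℝ × ℝ × ℝ → ℂ)
    (hf₁ : QuasiPeriodic f κ a₁) (hf₂ : QuasiPeriodic f κ a₂)
    (hf₃ : QuasiPeriodic f κ a₃) :
    ∀ i j : ℕ, i < n₁ → j < n₂ →
      ∃! t : ℤ × ℤ × ℤ × ℤ,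
        (0 ≤ t.2.2.1 ∧ t.2.2.1 < (n₁ : ℤ) ∧ 0 ≤ t.2.2.2 ∧ t.2.2.2 < (n₂ : ℤ) ∧
          (i : ℤ) = ((m₂ : ℤ) - (ρ₂ : ℤ) * n₁) + t.2.1 * ((m₁ : ℤ) - (ρ₁ : ℤ) * n₁)
            + t.1 * n₁ + t.2.2.1 ∧
          (j : ℤ) = ((m₃ : ℤ) - (ρ₃ : ℤ) * n₂) + t.2.1 * n₂ + t.2.2.2) ∧
        ∀ c d z : ℝ,
          f ((i : ℝ) * δx + c, (j : ℝ) * δy + d, (n₃ : ℝ) * δz + z)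
            = Complex.exp (2 * (π : ℂ) * Complex.I
                  * (dot3 κ (a₃ + (t.2.1 : ℝ) • a₂ + (t.1 : ℝ) • a₁) : ℝ))
                * f ((t.2.2.1 : ℝ) * δx + c, (t.2.2.2 : ℝ) * δy + d, z) := by
  intro i j _ _
  obtain ⟨⟨p, q, i', j'⟩, ht, huniq⟩ := existsUnique_shear_decomposition
    (by omega : (0 : ℤ) < n₁) (by omega : (0 : ℤ) < n₂) (m₁ - ρ₁ * n₁) (m₂ - ρ₂ * n₁)
    (m₃ - ρ₃ * n₂) i j
  refine ⟨(p, q, i', j'), ⟨ht, fun c d z => ?_⟩, fun t ht' => huniq t ht'.1⟩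
  obtain ⟨-, -, -, -, hi, hj⟩ := ht
  have hperiod : a₃ + (q : ℝ) • a₂ + (p : ℝ) • a₁ ∈ quasiPeriods f κ := by
    simp only [Int.cast_smul_eq_zsmul]
    exact add_mem (add_mem hf₃ (zsmul_mem hf₂ q)) (zsmul_mem hf₁ p)
  have hshift : ((i : ℝ) * δx + c, (j : ℝ) * δy + d, (n₃ : ℝ) * δz + z)
      = ((i' : ℝ) * δx + c, (j' : ℝ) * δy + d, z) + (a₃ + (q : ℝ) • a₂ + (p : ℝ) • a₁) := by
    have hi : (i : ℝ) = (m₂ - ρ₂ * n₁) + q * (m₁ - ρ₁ * n₁) + p * n₁ + i' := by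
      exact_mod_cast hi
    have hj : (j : ℝ) = (m₃ - ρ₃ * n₂) + q * n₂ + j' := by exact_mod_cast hj
    subst ha₁ ha₂ ha₃
    simp only [Prod.mk_add_mk, Prod.smul_mk, smul_eq_mul, Prod.mk.injEq]
    exact ⟨by rw [hi]; ring, by rw [hj]; ring, by ring⟩
  rw [hshift]
  exact QuasiPeriodic.apply_add hperiod _

/-- Theorem 3.3: periodicity of field components along `a₁`, `a₂` and `a₃`:
for `0 ≤ i < n₁`, `0 ≤ j < n₂` there are unique integers `p, q, i*, j*` with
`0 ≤ i* < n₁`, `0 ≤ j* < n₂`,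
`i = (m₂ − ρ₂n₁) + q(m₁ − ρ₁n₁) + p n₁ + i*`, `j = (m₃ − ρ₃n₂) + q n₂ + j*`, and
`f (iδx + c, jδy + d, n₃δz + z) = exp(2πι κ·(a₃ + q a₂ + p a₁)) f (i*δx + c, j*δy + d, z)`. -/
theorem stmt_2 (n₁ n₂ n₃ : ℕ) (hn₁ : 1 ≤ n₁) (hn₂ : 1 ≤ n₂) (hn₃ : 1 ≤ n₃)
    (m₁ m₂ m₃ : ℕ) (hm₁ : m₁ ≤ n₁) (hm₂ : m₂ ≤ n₁) (hm₃ : m₃ ≤ n₂)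
    (ρ₁ ρ₂ ρ₃ : ℕ) (hρ₁ : ρ₁ ≤ 1) (hρ₂ : ρ₂ ≤ 1) (hρ₃ : ρ₃ ≤ 1)
    (δx δy δz : ℝ) (hδx : 0 < δx) (hδy : 0 < δy) (hδz : 0 < δz) (κ : ℝ × ℝ × ℝ)
    (a₁ a₂ a₃ : ℝ × ℝ × ℝ)
    (ha₁ : a₁ = ((n₁ : ℝ) * δx, 0, 0))
    (ha₂ : a₂ = (((m₁ : ℝ) - (ρ₁ : ℝ) * n₁) * δx, (n₂ : ℝ) * δy, 0))
    (ha₃ : a₃ = (((m₂ : ℝ) - (ρ₂ : ℝ) * n₁) * δx, ((m₃ : ℝ) - (ρ₃ : ℝ) * n₂) * δy,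
      (n₃ : ℝ) * δz))
    (f : ℝ × ℝ × ℝ → ℂ)
    (hf₁ : QuasiPeriodic f κ a₁) (hf₂ : QuasiPeriodic f κ a₂)
    (hf₃ : QuasiPeriodic f κ a₃) :
    ∀ i j : ℕ, i < n₁ → j < n₂ →
      ∃! t : ℤ × ℤ × ℤ × ℤ,
        (0 ≤ t.2.2.1 ∧ t.2.2.1 < (n₁ : ℤ) ∧ 0 ≤ t.2.2.2 ∧ t.2.2.2 < (n₂ : ℤ) ∧
          (i : ℤ) = ((m₂ : ℤ) - (ρ₂ : ℤ) * n₁) + t.2.1 * ((m₁ : ℤ) - (ρ₁ : ℤ) * n₁)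
            + t.1 * n₁ + t.2.2.1 ∧
          (j : ℤ) = ((m₃ : ℤ) - (ρ₃ : ℤ) * n₂) + t.2.1 * n₂ + t.2.2.2) ∧
        ∀ c d z : ℝ,
          f ((i : ℝ) * δx + c, (j : ℝ) * δy + d, (n₃ : ℝ) * δz + z)
            = Complex.exp (2 * (π : ℂ) * Complex.I
                  * (dot3 κ (a₃ + (t.2.1 : ℝ) • a₂ + (t.1 : ℝ) • a₁) : ℝ))
                * f ((t.2.2.1 : ℝ) * δx + c, (t.2.2.2 : ℝ) * δy + d, z) :=
  stmt_2_general n₁ n₂ n₃ hn₁ hn₂ m₁ m₂ m₃ ρ₁ ρ₂ ρ₃ δx δy δz κ a₁ a₂ a₃ ha₁ ha₂ ha₃ f hf₁ hf₂ hf₃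
end

section
/- Set Π̃₁ := [Λq − Λ₁Λs*; Λq − Λ₂Λs*; Λq − Λ₃Λs*] ∈ ℂ^{3n×n} (vertically stacked) and Q̃₁ := (I₃ ⊗ T) Π̃₁. Then: (i) C*C · Q̃₁ = Q̃₁ · Λq; (ii) Q̃₁*Q̃₁ = (3Λq − Λp)Λq; (iii) Q̃₁* · (I₃ ⊗ T)[Λ₁; Λ₂; Λ₃] = 0, i.e. the columns of Q̃₁ are orthogonal to the null-space basis of C*C. (Section 5.1, the first family Q₁ of range-space vectors of C*C.) -/
open Matrix Kronecker

/-- Vertically stacked `3n × n` matrix `[A; B; C]`. -/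
def stack3 {n : ℕ} (A B C : Matrix (Fin n) (Fin n) ℂ) :
    Matrix (Fin 3 × Fin n) (Fin n) ℂ :=
  Matrix.of fun p t => if p.1 = 0 then A p.2 t else if p.1 = 1 then B p.2 t else C p.2 t

/-- The discrete curl operator `C = [[0, −C₃, C₂], [C₃, 0, −C₁], [−C₂, C₁, 0]]`. -/
def curlMat {n : ℕ} (C₁ C₂ C₃ : Matrix (Fin n) (Fin n) ℂ) :
    Matrix (Fin 3 × Fin n) (Fin 3 × Fin n) ℂ :=
  Matrix.of fun p q =>
    if p.1 = 0 ∧ q.1 = 1 then -C₃ p.2 q.2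
    else if p.1 = 0 ∧ q.1 = 2 then C₂ p.2 q.2
    else if p.1 = 1 ∧ q.1 = 0 then C₃ p.2 q.2
    else if p.1 = 1 ∧ q.1 = 2 then -C₁ p.2 q.2
    else if p.1 = 2 ∧ q.1 = 0 then -C₂ p.2 q.2
    else if p.1 = 2 ∧ q.1 = 1 then C₁ p.2 q.2
    else 0

/-! Conjugation by the unitary `I₃ ⊗ T` turns `C` into the curl matrix `L` of the diagonal
matrices `Λℓ` (because `Cℓ T = T Λℓ`) and preserves inner products, so all three claims become
identities between diagonal matrices, i.e. identities in `ℂ³` for each eigenvalue triple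
`λ = (λ₁, λ₂, λ₃)`. There `L` is the cross product with `λ`, so `LᴴL = |λ|² - λλᴴ`, and the
column `π = |λ|² 1 - s̄ λ` of `Π̃₁` (with `s = λ₁ + λ₂ + λ₃`) is orthogonal to `λ`: this gives
(i) and (iii), and `|π|² = 3|λ|⁴ - |s|²|λ|²` gives (ii). -/

section Blocks

variable {n : ℕ}

lemma stack3_mul (A B C D : Matrix (Fin n) (Fin n) ℂ) :
    stack3 A B C * D = stack3 (A * D) (B * D) (C * D) := by
  ext ⟨i, k⟩ j
  fin_cases i <;> simp [stack3, mul_apply]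

lemma conjTranspose_stack3_mul_stack3 (A B C D E F : Matrix (Fin n) (Fin n) ℂ) :
    (stack3 A B C)ᴴ * stack3 D E F = Aᴴ * D + Bᴴ * E + Cᴴ * F := by
  ext i j
  simp [mul_apply, stack3, Fintype.sum_prod_type, Fin.sum_univ_three]

lemma curlMat_mul_stack3 (C₁ C₂ C₃ A B C : Matrix (Fin n) (Fin n) ℂ) :
    curlMat C₁ C₂ C₃ * stack3 A B C =
      stack3 (C₂ * C - C₃ * B) (C₃ * A - C₁ * C) (C₁ * B - C₂ * A) := by
  ext ⟨i, k⟩ j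
  fin_cases i <;>
    simp [stack3, curlMat, mul_apply, Fintype.sum_prod_type, Fin.sum_univ_three,
      Finset.sum_neg_distrib, sub_eq_add_neg, add_comm]

lemma conjTranspose_curlMat (C₁ C₂ C₃ : Matrix (Fin n) (Fin n) ℂ) :
    (curlMat C₁ C₂ C₃)ᴴ = curlMat (-C₁ᴴ) (-C₂ᴴ) (-C₃ᴴ) := by
  ext ⟨i, k⟩ ⟨j, l⟩
  fin_cases i <;> fin_cases j <;> simp [curlMat]

lemma curlMat_mul_one_kronecker (C₁ C₂ C₃ T : Matrix (Fin n) (Fin n) ℂ) :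
    curlMat C₁ C₂ C₃ * ((1 : Matrix (Fin 3) (Fin 3) ℂ) ⊗ₖ T) =
      curlMat (C₁ * T) (C₂ * T) (C₃ * T) := by
  ext ⟨i, k⟩ ⟨j, l⟩
  fin_cases i <;> fin_cases j <;>
    simp [curlMat, mul_apply, Fintype.sum_prod_type, one_apply]

lemma one_kronecker_mul_curlMat (T C₁ C₂ C₃ : Matrix (Fin n) (Fin n) ℂ) :
    ((1 : Matrix (Fin 3) (Fin 3) ℂ) ⊗ₖ T) * curlMat C₁ C₂ C₃ =
      curlMat (T * C₁) (T * C₂) (T * C₃) := by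
  ext ⟨i, k⟩ ⟨j, l⟩
  fin_cases i <;> fin_cases j <;>
    simp [curlMat, mul_apply, Fintype.sum_prod_type, Fin.sum_univ_three, one_apply]

end Blocks

section Unitary

variable {m k l p R : Type*} [Fintype m] [CommRing R] [StarRing R]

lemma conjTranspose_mul_mul_mul_cancel [Fintype k] [DecidableEq k] {U : Matrix m k R}
    (hU : Uᴴ * U = 1) (X : Matrix k l R) (Y : Matrix k p R) : (U * X)ᴴ * (U * Y) = Xᴴ * Y := by
  rw [conjTranspose_mul, Matrix.mul_assoc, ← Matrix.mul_assoc Uᴴ, hU, Matrix.one_mul]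

lemma conjTranspose_mul_eq_of_mul_eq [DecidableEq m] {U A B : Matrix m m R} (hU : Uᴴ * U = 1)
    (h : A * U = U * B) : Aᴴ * U = U * Bᴴ := by
  have hA : A = U * B * Uᴴ := by
    rw [← h, Matrix.mul_assoc, mul_eq_one_comm.mp hU, Matrix.mul_one]
  rw [hA, conjTranspose_mul, conjTranspose_mul, conjTranspose_conjTranspose]
  simp only [Matrix.mul_assoc, hU, Matrix.mul_one]

end Unitary

lemma curlMat_mul_one_kronecker_of_mul_eq {n : ℕ}
    {T Λ₁ Λ₂ Λ₃ C₁ C₂ C₃ : Matrix (Fin n) (Fin n) ℂ}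
    (h₁ : C₁ * T = T * Λ₁) (h₂ : C₂ * T = T * Λ₂) (h₃ : C₃ * T = T * Λ₃) :
    curlMat C₁ C₂ C₃ * ((1 : Matrix (Fin 3) (Fin 3) ℂ) ⊗ₖ T) =
      ((1 : Matrix (Fin 3) (Fin 3) ℂ) ⊗ₖ T) * curlMat Λ₁ Λ₂ Λ₃ := by
  rw [curlMat_mul_one_kronecker, one_kronecker_mul_curlMat, h₁, h₂, h₃]

section Diagonal

variable {n : ℕ} {Λ₁ Λ₂ Λ₃ Λq Λs : Matrix (Fin n) (Fin n) ℂ}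

lemma conjTranspose_curlMat_mul_self_mul_stack3_of_isDiag
    (hΛ₁ : Λ₁.IsDiag) (hΛ₂ : Λ₂.IsDiag) (hΛ₃ : Λ₃.IsDiag)
    (hΛq : Λq = Λ₁ᴴ * Λ₁ + Λ₂ᴴ * Λ₂ + Λ₃ᴴ * Λ₃) (hΛs : Λs = Λ₁ + Λ₂ + Λ₃) :
    (curlMat Λ₁ Λ₂ Λ₃)ᴴ * curlMat Λ₁ Λ₂ Λ₃ *
        stack3 (Λq - Λ₁ * Λsᴴ) (Λq - Λ₂ * Λsᴴ) (Λq - Λ₃ * Λsᴴ) =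
      stack3 (Λq - Λ₁ * Λsᴴ) (Λq - Λ₂ * Λsᴴ) (Λq - Λ₃ * Λsᴴ) * Λq := by
  subst hΛq hΛs
  rw [← hΛ₁.diagonal_diag, ← hΛ₂.diagonal_diag, ← hΛ₃.diagonal_diag]
  simp only [conjTranspose_curlMat, Matrix.mul_assoc, curlMat_mul_stack3, stack3_mul,
    diagonal_conjTranspose, diagonal_mul_diagonal', diagonal_add, diagonal_sub, diagonal_neg]
  congr 1 <;> congr 1 <;> funext i <;> simp only [Pi.star_apply, star_add] <;> ring

lemma conjTranspose_stack3_mul_self_of_isDiag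
    (hΛ₁ : Λ₁.IsDiag) (hΛ₂ : Λ₂.IsDiag) (hΛ₃ : Λ₃.IsDiag)
    (hΛq : Λq = Λ₁ᴴ * Λ₁ + Λ₂ᴴ * Λ₂ + Λ₃ᴴ * Λ₃) (hΛs : Λs = Λ₁ + Λ₂ + Λ₃) :
    (stack3 (Λq - Λ₁ * Λsᴴ) (Λq - Λ₂ * Λsᴴ) (Λq - Λ₃ * Λsᴴ))ᴴ *
        stack3 (Λq - Λ₁ * Λsᴴ) (Λq - Λ₂ * Λsᴴ) (Λq - Λ₃ * Λsᴴ) =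
      ((3 : ℂ) • Λq - Λs * Λsᴴ) * Λq := by
  subst hΛq hΛs
  rw [← hΛ₁.diagonal_diag, ← hΛ₂.diagonal_diag, ← hΛ₃.diagonal_diag]
  simp only [conjTranspose_stack3_mul_stack3, diagonal_conjTranspose, diagonal_mul_diagonal',
    diagonal_add, diagonal_sub, ← diagonal_smul]
  congr 1
  funext i
  simp only [Pi.star_apply, Pi.smul_apply, smul_eq_mul, star_add, star_sub, star_mul', star_star]
  ring

lemma conjTranspose_stack3_mul_stack3_of_isDiag
    (hΛ₁ : Λ₁.IsDiag) (hΛ₂ : Λ₂.IsDiag) (hΛ₃ : Λ₃.IsDiag)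
    (hΛq : Λq = Λ₁ᴴ * Λ₁ + Λ₂ᴴ * Λ₂ + Λ₃ᴴ * Λ₃) (hΛs : Λs = Λ₁ + Λ₂ + Λ₃) :
    (stack3 (Λq - Λ₁ * Λsᴴ) (Λq - Λ₂ * Λsᴴ) (Λq - Λ₃ * Λsᴴ))ᴴ * stack3 Λ₁ Λ₂ Λ₃ = 0 := by
  subst hΛq hΛs
  rw [← hΛ₁.diagonal_diag, ← hΛ₂.diagonal_diag, ← hΛ₃.diagonal_diag, ← diagonal_zero]
  simp only [conjTranspose_stack3_mul_stack3, diagonal_conjTranspose, diagonal_mul_diagonal',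
    diagonal_add, diagonal_sub]
  congr 1
  funext i
  simp only [Pi.star_apply, star_add, star_sub, star_mul', star_star]
  ring

end Diagonal

theorem stmt_13_general (n : ℕ)
    (T Λ₁ Λ₂ Λ₃ C₁ C₂ C₃ : Matrix (Fin n) (Fin n) ℂ)
    (hT : Tᴴ * T = 1)
    (hΛ₁ : Λ₁.IsDiag) (hΛ₂ : Λ₂.IsDiag) (hΛ₃ : Λ₃.IsDiag)
    (h₁ : C₁ * T = T * Λ₁) (h₂ : C₂ * T = T * Λ₂) (h₃ : C₃ * T = T * Λ₃)
    (Λq Λs Λp : Matrix (Fin n) (Fin n) ℂ)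
    (hΛq : Λq = Λ₁ᴴ * Λ₁ + Λ₂ᴴ * Λ₂ + Λ₃ᴴ * Λ₃)
    (hΛs : Λs = Λ₁ + Λ₂ + Λ₃)
    (hΛp : Λp = Λs * Λsᴴ)
    (Q₁ : Matrix (Fin 3 × Fin n) (Fin n) ℂ)
    (hQ₁ : Q₁ = ((1 : Matrix (Fin 3) (Fin 3) ℂ) ⊗ₖ T)
      * stack3 (Λq - Λ₁ * Λsᴴ) (Λq - Λ₂ * Λsᴴ) (Λq - Λ₃ * Λsᴴ)) :
    (curlMat C₁ C₂ C₃)ᴴ * curlMat C₁ C₂ C₃ * Q₁ = Q₁ * Λq ∧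
    Q₁ᴴ * Q₁ = ((3 : ℂ) • Λq - Λp) * Λq ∧
    Q₁ᴴ * (((1 : Matrix (Fin 3) (Fin 3) ℂ) ⊗ₖ T) * stack3 Λ₁ Λ₂ Λ₃) = 0 := by
  set U := (1 : Matrix (Fin 3) (Fin 3) ℂ) ⊗ₖ T
  set P := stack3 (Λq - Λ₁ * Λsᴴ) (Λq - Λ₂ * Λsᴴ) (Λq - Λ₃ * Λsᴴ) with hP
  have hU : Uᴴ * U = 1 := by
    rw [conjTranspose_kronecker, ← mul_kronecker_mul, hT, conjTranspose_one, Matrix.one_mul,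
      one_kronecker_one]
  have hCU : curlMat C₁ C₂ C₃ * U = U * curlMat Λ₁ Λ₂ Λ₃ :=
    curlMat_mul_one_kronecker_of_mul_eq h₁ h₂ h₃
  have hUC_adj := conjTranspose_mul_eq_of_mul_eq hU hCU
  subst hQ₁ hΛp
  refine ⟨?_, ?_, ?_⟩
  · calc (curlMat C₁ C₂ C₃)ᴴ * curlMat C₁ C₂ C₃ * (U * P)
        = (curlMat C₁ C₂ C₃)ᴴ * U * (curlMat Λ₁ Λ₂ Λ₃ * P) := by
          rw [Matrix.mul_assoc, ← Matrix.mul_assoc _ U, hCU]; simp only [Matrix.mul_assoc]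
      _ = U * ((curlMat Λ₁ Λ₂ Λ₃)ᴴ * curlMat Λ₁ Λ₂ Λ₃ * P) := by
          rw [hUC_adj]; simp only [Matrix.mul_assoc]
      _ = U * P * Λq := by
          rw [hP, conjTranspose_curlMat_mul_self_mul_stack3_of_isDiag hΛ₁ hΛ₂ hΛ₃ hΛq hΛs,
            Matrix.mul_assoc]
  · rw [conjTranspose_mul_mul_mul_cancel hU,
      conjTranspose_stack3_mul_self_of_isDiag hΛ₁ hΛ₂ hΛ₃ hΛq hΛs]
  · rw [conjTranspose_mul_mul_mul_cancel hU,
      conjTranspose_stack3_mul_stack3_of_isDiag hΛ₁ hΛ₂ hΛ₃ hΛq hΛs]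

/-- Section 5.1: properties of the first family `Q̃₁ = (I₃ ⊗ T) Π̃₁` of
range-space vectors of `C*C`, with `Π̃₁ = [Λq − Λ₁Λs*; Λq − Λ₂Λs*; Λq − Λ₃Λs*]`. -/
theorem stmt_13 (n : ℕ) (hn : 1 ≤ n)
    (T Λ₁ Λ₂ Λ₃ C₁ C₂ C₃ : Matrix (Fin n) (Fin n) ℂ)
    (hT : Tᴴ * T = 1) (hT' : T * Tᴴ = 1)
    (hΛ₁ : Λ₁.IsDiag) (hΛ₂ : Λ₂.IsDiag) (hΛ₃ : Λ₃.IsDiag)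
    (h₁ : C₁ * T = T * Λ₁) (h₂ : C₂ * T = T * Λ₂) (h₃ : C₃ * T = T * Λ₃)
    (Λq Λs Λp : Matrix (Fin n) (Fin n) ℂ)
    (hΛq : Λq = Λ₁ᴴ * Λ₁ + Λ₂ᴴ * Λ₂ + Λ₃ᴴ * Λ₃)
    (hΛs : Λs = Λ₁ + Λ₂ + Λ₃)
    (hΛp : Λp = Λs * Λsᴴ)
    (Q₁ : Matrix (Fin 3 × Fin n) (Fin n) ℂ)
    (hQ₁ : Q₁ = ((1 : Matrix (Fin 3) (Fin 3) ℂ) ⊗ₖ T)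
      * stack3 (Λq - Λ₁ * Λsᴴ) (Λq - Λ₂ * Λsᴴ) (Λq - Λ₃ * Λsᴴ)) :
    (curlMat C₁ C₂ C₃)ᴴ * curlMat C₁ C₂ C₃ * Q₁ = Q₁ * Λq ∧
    Q₁ᴴ * Q₁ = ((3 : ℂ) • Λq - Λp) * Λq ∧
    Q₁ᴴ * (((1 : Matrix (Fin 3) (Fin 3) ℂ) ⊗ₖ T) * stack3 Λ₁ Λ₂ Λ₃) = 0 :=
  stmt_13_general n T Λ₁ Λ₂ Λ₃ C₁ C₂ C₃ hT hΛ₁ hΛ₂ hΛ₃ h₁ h₂ h₃ Λq Λs Λp hΛq hΛs hΛp Q₁ hQ₁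
end
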